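/- The middle circle S¹ × {π} of the cylinder S¹ × [0, 2π] is an equivariant strong deformation retract with respect to the involution σ(z, t) = (z·exp(it), 2π − t): there is a homotopy H: (S¹ × [0,2π]) × [0,1] → S¹ × [0,2π] from the identity to a retraction onto S¹ × {π} that is σ-equivariant at every time and fixes S¹ × {π} pointwise. -/

import Mathlib

open Real

/-!
Slide the height `t` linearly to `π` while rotating the circle coordinate by half of the
height travelled, `z ↦ z · exp(s (t - π) / 2)`. The involution adds the height to the angle
and reflects the height about `π`; the half-speed rotation is exactly what makes the two
angle changes agree, so the homotopy commutes with `σ`.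
-/

namespace MiddleCircle

local notation "Cyl" => Circle × Set.Icc (0 : ℝ) (2 * π)

open scoped unitInterval

lemma reflect_mem_Icc (t : Set.Icc (0 : ℝ) (2 * π)) :
    2 * π - (t : ℝ) ∈ Set.Icc (0 : ℝ) (2 * π) := by
  obtain ⟨t, ht₀, ht₁⟩ := t
  constructor <;> simp only <;> linarith

lemma lineMap_pi_mem_Icc (t : Set.Icc (0 : ℝ) (2 * π)) (s : I) :
    (1 - (s : ℝ)) * t + s * π ∈ Set.Icc (0 : ℝ) (2 * π) :=
  convex_Icc (0 : ℝ) (2 * π) t.2 ⟨pi_pos.le, by linarith [pi_pos]⟩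
    (sub_nonneg.2 s.2.2) s.2.1 (sub_add_cancel 1 _)

noncomputable def involution (p : Cyl) : Cyl :=
  (p.1 * Circle.exp p.2, ⟨2 * π - p.2, reflect_mem_Icc p.2⟩)

noncomputable def homotopy (p : Cyl × I) : Cyl :=
  (p.1.1 * Circle.exp (p.2 * (p.1.2 - π) / 2),
    ⟨(1 - (p.2 : ℝ)) * p.1.2 + p.2 * π, lineMap_pi_mem_Icc p.1.2 p.2⟩)

lemma continuous_homotopy : Continuous homotopy :=
  ((continuous_fst.comp continuous_fst).mul (Circle.exp.continuous.comp (by fun_prop))).prodMk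
    (by fun_prop)

@[simp]
lemma homotopy_zero (x : Cyl) : homotopy (x, 0) = x := by
  simp [homotopy]

@[simp]
lemma homotopy_one_snd (x : Cyl) : ((homotopy (x, 1)).2 : ℝ) = π := by
  simp [homotopy]

lemma homotopy_of_snd_eq_pi {x : Cyl} (hx : (x.2 : ℝ) = π) (s : I) : homotopy (x, s) = x := by
  ext
  · simp [homotopy, hx]
  · simp only [homotopy, hx]
    ring

lemma homotopy_involution (x : Cyl) (s : I) :
    homotopy (involution x, s) = involution (homotopy (x, s)) := by
  ext
  · simp only [homotopy, involution, mul_assoc, ← Circle.exp_add]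
    congr 3
    ring
  · simp only [homotopy, involution]
    ring

end MiddleCircle

/-- The middle circle `S¹ × {π}` of the cylinder `S¹ × [0, 2π]` is an
equivariant strong deformation retract with respect to the involution
`σ(z, t) = (z·exp(it), 2π − t)`: there is a homotopy `H` from the identity to a retraction
onto `S¹ × {π}` that is `σ`-equivariant at every time and fixes `S¹ × {π}` pointwise. -/
theorem middle_circle_equivariant_deformation_retract
    (σ : Circle × Set.Icc (0 : ℝ) (2 * π) → Circle × Set.Icc (0 : ℝ) (2 * π))
    (hσ : ∀ p, (σ p).1 = p.1 * Circle.exp (p.2 : ℝ) ∧ ((σ p).2 : ℝ) = 2 * π - (p.2 : ℝ)) :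
    ∃ H : (Circle × Set.Icc (0 : ℝ) (2 * π)) × unitInterval →
        Circle × Set.Icc (0 : ℝ) (2 * π),
      Continuous H ∧
      (∀ x, H (x, 0) = x) ∧
      (∀ x, ((H (x, 1)).2 : ℝ) = π) ∧
      (∀ x s, (x.2 : ℝ) = π → H (x, s) = x) ∧
      (∀ x s, H (σ x, s) = σ (H (x, s))) := by
  have hσ_eq : σ = MiddleCircle.involution := funext fun p =>
    Prod.ext (hσ p).1 (Subtype.ext (hσ p).2)
  subst hσ_eq
  exact ⟨MiddleCircle.homotopy, MiddleCircle.continuous_homotopy, MiddleCircle.homotopy_zero,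
    MiddleCircle.homotopy_one_snd, fun x s hx => MiddleCircle.homotopy_of_snd_eq_pi hx s,
    MiddleCircle.homotopy_involution⟩
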